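/- arXiv:math/0003111 — 4 statements merged into one kernel-verified Lean document; each statement's English description precedes it below -/
import Mathlib

section
/- Let E and F be real Banach spaces with E ≠ {0}, and let n ≥ m ≥ 0 be integers. Then the space P(^mE,F) is isomorphic to a complemented subspace of P(^nE,F). -/
noncomputable section

open Metric Filter Topology
open scoped ENNReal NNReal

namespace PPV

/-- The closed unit ball of `E`, as a set. -/
abbrev Ball (E : Type*) [NormedAddCommGroup E] : Set E := Metric.closedBall (0 : E) 1

/-- A continuous multilinear map is symmetric. -/
def IsSymm {E F : Type*} [NormedAddCommGroup E] [NormedSpace ℝ E]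
    [NormedAddCommGroup F] [NormedSpace ℝ F] {k : ℕ}
    (A : ContinuousMultilinearMap ℝ (fun _ : Fin k => E) F) : Prop :=
  ∀ (σ : Equiv.Perm (Fin k)) (v : Fin k → E), (A fun i => v (σ i)) = A v

/-- `A` is the (symmetric) continuous multilinear map associated to the continuous
`k`-homogeneous polynomial represented by `f`, a bounded continuous function on the
closed unit ball of `E` (a continuous `k`-homogeneous polynomial is determined by
its restriction to the unit ball, and its norm is the sup norm there). -/
def Represents {E F : Type*} [NormedAddCommGroup E] [NormedSpace ℝ E]
    [NormedAddCommGroup F] [NormedSpace ℝ F] {k : ℕ}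
    (A : ContinuousMultilinearMap ℝ (fun _ : Fin k => E) F)
    (f : BoundedContinuousFunction (Ball E) F) : Prop :=
  IsSymm A ∧ ∀ y : Ball E, f y = A fun _ => (y : E)

/-- The space `P(^kE,F)` of continuous `k`-homogeneous polynomials from `E` to `F`,
realized (isometrically, via restriction to the unit ball) as a submodule of the space
of bounded continuous functions on the closed unit ball of `E`; the induced norm is
`‖P‖ = sup_{‖x‖ ≤ 1} ‖P x‖`. -/
def polySet (k : ℕ) (E F : Type*) [NormedAddCommGroup E] [NormedSpace ℝ E]
    [NormedAddCommGroup F] [NormedSpace ℝ F] :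
    Submodule ℝ (BoundedContinuousFunction (Ball E) F) where
  carrier := {f | ∃ A : ContinuousMultilinearMap ℝ (fun _ : Fin k => E) F, Represents A f}
  add_mem' := by
    rintro f g ⟨A, hA, hAf⟩ ⟨B, hB, hBf⟩
    exact ⟨A + B, fun σ v => by simp [hA σ v, hB σ v], fun y => by simp [hAf y, hBf y]⟩
  zero_mem' := ⟨0, fun σ v => rfl, fun y => by simp⟩
  smul_mem' := by
    rintro c f ⟨A, hA, hAf⟩
    exact ⟨c • A, fun σ v => by simp [hA σ v], fun y => by simp [hAf y]⟩

/-- A map `P : E → F` is continuous from the weak topology of `E` to the norm topology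
of `F` on bounded subsets of `E`. -/
def WeakContOnBounded (E F : Type*) [NormedAddCommGroup E] [NormedSpace ℝ E]
    [NormedAddCommGroup F] [NormedSpace ℝ F] (P : E → F) : Prop :=
  ∀ S : Set E, Bornology.IsBounded S →
    ContinuousOn (fun x : WeakSpace ℝ E => P ((toWeakSpace ℝ E).symm x))
      (toWeakSpace ℝ E '' S)

/-- The subspace `P_wb(^kE,F)` of `P(^kE,F)` consisting of the polynomials which are
weak-to-norm continuous on bounded sets. -/
def polyWbSet (k : ℕ) (E F : Type*) [NormedAddCommGroup E] [NormedSpace ℝ E]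
    [NormedAddCommGroup F] [NormedSpace ℝ F] :
    Submodule ℝ (BoundedContinuousFunction (Ball E) F) where
  carrier := {f | ∃ A : ContinuousMultilinearMap ℝ (fun _ : Fin k => E) F,
    Represents A f ∧ WeakContOnBounded E F (fun x => A fun _ => x)}
  add_mem' := by
    rintro f g ⟨A, ⟨hA, hAf⟩, hAw⟩ ⟨B, ⟨hB, hBf⟩, hBw⟩
    refine ⟨A + B, ⟨fun σ v => by simp [hA σ v, hB σ v], fun y => by simp [hAf y, hBf y]⟩,
      fun S hS => ?_⟩
    have := (hAw S hS).add (hBw S hS)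
    exact this
  zero_mem' := ⟨0, ⟨fun σ v => rfl, fun y => by simp⟩, fun S hS => by
    simpa using continuousOn_const (c := (0 : F))⟩
  smul_mem' := by
    rintro c f ⟨A, ⟨hA, hAf⟩, hAw⟩
    refine ⟨c • A, ⟨fun σ v => by simp [hA σ v], fun y => by simp [hAf y]⟩, fun S hS => ?_⟩
    have := (hAw S hS).const_smul c
    exact this

/-- A Banach space `Y` contains a copy of a Banach space `X`: there is a linear
homeomorphic embedding of `X` into `Y`. -/
def ContainsCopy (X Y : Type*) [NormedAddCommGroup X] [NormedSpace ℝ X]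
    [NormedAddCommGroup Y] [NormedSpace ℝ Y] : Prop :=
  ∃ f : X →L[ℝ] Y, ∃ c : ℝ, 0 < c ∧ ∀ x, c * ‖x‖ ≤ ‖f x‖

/-- A Banach space `Y` contains a complemented copy of a Banach space `X`: there is a
linear homeomorphic embedding of `X` into `Y` whose image is the range of a bounded
linear projection on `Y`. -/
def ContainsComplCopy (X Y : Type*) [NormedAddCommGroup X] [NormedSpace ℝ X]
    [NormedAddCommGroup Y] [NormedSpace ℝ Y] : Prop :=
  ∃ f : X →L[ℝ] Y, (∃ c : ℝ, 0 < c ∧ ∀ x, c * ‖x‖ ≤ ‖f x‖) ∧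
    ∃ π : Y →L[ℝ] Y, (∀ y, π y ∈ Set.range f) ∧ ∀ y ∈ Set.range f, π y = y

/-- The Banach space `ℓ∞` of bounded real sequences with the sup norm. -/
abbrev Linf : Type := lp (fun _ : ℕ => ℝ) ⊤

/-- The Banach space `ℓ₁` of absolutely summable real sequences. -/
abbrev LOne : Type := lp (fun _ : ℕ => ℝ) 1

/-- `c₀`, the subspace of `ℓ∞` of sequences converging to `0`. -/
def c0Set : Submodule ℝ Linf where
  carrier := {ξ | Tendsto (fun n => ξ n) atTop (nhds (0 : ℝ))}
  add_mem' := by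
    intro f g hf hg
    have h0 := hf.add hg
    rw [add_zero] at h0
    show Tendsto (fun n => (f + g) n) atTop (nhds (0 : ℝ))
    refine h0.congr fun n => ?_
    simp [lp.coeFn_add]
  zero_mem' := by
    show Tendsto (fun n => (0 : Linf) n) atTop (nhds (0 : ℝ))
    have h0 : Tendsto (fun _ : ℕ => (0 : ℝ)) atTop (nhds (0 : ℝ)) := tendsto_const_nhds
    refine h0.congr fun n => ?_
    simp [lp.coeFn_zero]
  smul_mem' := by
    intro c f hf
    have h0 := hf.const_mul c
    rw [mul_zero] at h0
    show Tendsto (fun n => (c • f) n) atTop (nhds (0 : ℝ))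
    refine h0.congr fun n => ?_
    simp [lp.coeFn_smul]

/-- A series `∑ xₙ` in a Banach space is weakly unconditionally Cauchy. -/
def WuC {X : Type*} [NormedAddCommGroup X] [NormedSpace ℝ X] (x : ℕ → X) : Prop :=
  ∀ φ : X →L[ℝ] ℝ, Summable fun n => |φ (x n)|

/-- A subset of `F` is relatively weakly compact: its closure in the weak topology
is weakly compact. -/
def RelWeaklyCompact {F : Type*} [NormedAddCommGroup F] [NormedSpace ℝ F] (s : Set F) : Prop :=
  IsCompact (closure (toWeakSpace ℝ F '' s))

/-- A (not necessarily linear) map `P : E → F` is unconditionally converging if, for each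
w.u.C. series `∑ xₙ` in `E`, the sequence `(P (∑_{i<n} x i))ₙ` converges in `F`. -/
def UncondConv {E F : Type*} [NormedAddCommGroup E] [NormedSpace ℝ E]
    [NormedAddCommGroup F] [NormedSpace ℝ F] (P : E → F) : Prop :=
  ∀ x : ℕ → E, WuC x → ∃ y : F, Tendsto (fun n => P (∑ i ∈ Finset.range n, x i)) atTop (nhds y)

/-- A Banach space `E` has Pełczyński's property (V) if every unconditionally converging
(bounded linear) operator from `E` into any Banach space is weakly compact. -/
def PropertyV (E : Type*) [NormedAddCommGroup E] [NormedSpace ℝ E] : Prop :=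
  ∀ (F : Type*) [NormedAddCommGroup F] [NormedSpace ℝ F] [CompleteSpace F],
    ∀ T : E →L[ℝ] F, UncondConv (fun x => T x) →
      RelWeaklyCompact ((fun x => T x) '' Metric.closedBall (0 : E) 1)

/-- `E` has an unconditional finite dimensional expansion of the identity: a sequence
`(Aₙ)` of finite-rank bounded operators on `E` with `x = ∑ₙ Aₙ x` unconditionally for
every `x ∈ E` (unconditional convergence of the series is `HasSum`). -/
def HasUFDEI (E : Type*) [NormedAddCommGroup E] [NormedSpace ℝ E] : Prop :=
  ∃ A : ℕ → E →L[ℝ] E, (∀ n, FiniteDimensional ℝ (LinearMap.range (A n).toLinearMap)) ∧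
    ∀ x : E, HasSum (fun n => A n x) x

/-- An operator `C : E → P(^kE,F)` is symmetric: `(C x)^(y₁,…,y_k) = (C y₁)^(x,y₂,…,y_k)`,
where `(C z)^` is the symmetric `k`-linear map associated to `C z`.  (Equivalently:
replacing, in any slot, the argument `z` of the symmetric multilinear map associated to
`C x` by `x` and instead applying the multilinear map associated to `C z` gives the
same value.) -/
def IsSymmOp {E F : Type*} [NormedAddCommGroup E] [NormedSpace ℝ E]
    [NormedAddCommGroup F] [NormedSpace ℝ F] {k : ℕ}
    (C : E →L[ℝ] polySet k E F) : Prop :=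
  ∀ (x z : E) (A B : ContinuousMultilinearMap ℝ (fun _ : Fin k => E) F),
    Represents A (C x : BoundedContinuousFunction (Ball E) F) →
    Represents B (C z : BoundedContinuousFunction (Ball E) F) →
    ∀ (v : Fin k → E) (i : Fin k),
      A (Function.update v i z) = B (Function.update v i x)

/-- `P_wb(^kE,F)` is complemented in `P(^kE,F)`: there is a bounded linear projection
on `P(^kE,F)` whose range is `P_wb(^kE,F)`. -/
def WbComplemented (k : ℕ) (E F : Type*) [NormedAddCommGroup E] [NormedSpace ℝ E]
    [NormedAddCommGroup F] [NormedSpace ℝ F] : Prop :=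
  ∃ π : polySet k E F →L[ℝ] polySet k E F,
    (∀ f : polySet k E F, (π f : BoundedContinuousFunction (Ball E) F) ∈ polyWbSet k E F) ∧
    ∀ f : polySet k E F, (f : BoundedContinuousFunction (Ball E) F) ∈ polyWbSet k E F → π f = f

/-- `ℓ_p` for an extended-real exponent `p`. -/
abbrev Lp' (p : ℝ≥0∞) : Type := lp (fun _ : ℕ => ℝ) p

end PPV

/-!
Fix `x₀ : E` and `φ : E →L[ℝ] ℝ` with `φ x₀ = 1`. Multiplication by `φ ^ (n - m)` embeds
`P(^mE,F)` into `P(^nE,F)`, and it has a bounded left inverse. Indeed, write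
`x = φ x • x₀ + y` with `φ y = 0`. If `Q = φ ^ (n - m) • P`, then
`Q (t • x₀ + y) = t ^ (n - m) • P (t • x₀ + y)` for all real `t`; expanding both sides
binomially and comparing coefficients of powers of `t` gives
`P x = ∑_{j ≤ m} C(n, n-m+j) φ(x)^j Q̂(x₀^(n-m+j), y^(m-j))`, where `Q̂` is the symmetric
multilinear map of `Q`. The right-hand side is a continuous `m`-homogeneous polynomial in `x`,
and it depends boundedly on `Q` because, by the polarization formula, `‖Q̂‖ ≤ C_n ‖Q‖`.
-/

namespace PPV

open Finset

def lowerSlots (k j : ℕ) : Finset (Fin k) := {i | (i : ℕ) < j}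

lemma card_lowerSlots {k j : ℕ} (h : j ≤ k) : #(lowerSlots k j) = j := by
  rw [lowerSlots, Fin.card_filter_val_lt, min_eq_right h]

lemma card_compl_lowerSlots {k j l : ℕ} (h : j + l = k) : #(lowerSlots k j)ᶜ = l := by
  rw [card_compl, Fintype.card_fin, card_lowerSlots (by omega)]
  omega

lemma sum_superset_neg_one_pow_card_compl {ι : Type*} [Fintype ι] [DecidableEq ι]
    (R : Finset ι) :
    ∑ S with R ⊆ S, (-1 : ℝ) ^ #Sᶜ = if R = univ then 1 else 0 := by
  have hcompl : ∑ S with R ⊆ S, (-1 : ℝ) ^ #Sᶜ = ∑ T ∈ Rᶜ.powerset, (-1 : ℝ) ^ #T := by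
    refine sum_nbij' compl compl (fun S hS => ?_) (fun T hT => ?_)
      (fun S _ => compl_compl S) (fun T _ => compl_compl T) (fun S _ => rfl)
    · simpa using hS
    · simpa [subset_compl_comm] using hT
  have hsign := congrArg (Int.cast : ℤ → ℝ) (sum_powerset_neg_one_pow_card (x := Rᶜ))
  push_cast at hsign
  rw [hcompl, hsign]
  simp only [compl_eq_empty_iff]

lemma sum_ite_surjective_eq_sum_perm {ι M : Type*} [Fintype ι] [DecidableEq ι]
    [AddCommMonoid M] [DecidablePred (Function.Surjective : (ι → ι) → Prop)]
    (g : (ι → ι) → M) :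
    ∑ r : ι → ι, (if Function.Surjective r then g r else 0) = ∑ σ : Equiv.Perm ι, g σ := by
  rw [← sum_filter]
  symm
  refine sum_bij (fun σ _ => ⇑σ) (fun σ _ => by simpa using σ.surjective)
    (fun σ _ τ _ h => Equiv.ext (congrFun h)) (fun r hr => ?_) (fun σ _ => rfl)
  have hr : Function.Surjective r := (mem_filter.1 hr).2
  exact ⟨Equiv.ofBijective r (Finite.surjective_iff_bijective.1 hr), mem_univ _, rfl⟩

lemma coeff_eq_of_forall_sum_pow_smul_eq {K V : Type*} [Field K] [Infinite K]
    [AddCommGroup V] [Module K V] {N M p : ℕ} {a b : ℕ → V}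
    (h : ∀ t : K, ∑ i ∈ range N, t ^ i • a i = ∑ j ∈ range M, t ^ (p + j) • b j)
    (hN : p + M ≤ N) {j : ℕ} (hj : j < M) : a (p + j) = b j := by
  open Polynomial in
  rw [← sub_eq_zero, ← Module.forall_dual_apply_eq_zero_iff K]
  intro ψ
  have hpoly : ∑ i ∈ range N, C (ψ (a i)) * X ^ i
      = ∑ j ∈ range M, C (ψ (b j)) * X ^ (p + j) := by
    refine Polynomial.funext fun t => ?_
    have := congrArg ψ (h t)
    simp only [map_sum, map_smul, smul_eq_mul] at this
    simp only [eval_finsetSum, eval_mul, eval_C, eval_pow, eval_X]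
    simpa only [mul_comm] using this
  have hcoeff := congrArg (coeff · (p + j)) hpoly
  simp only [finsetSum_coeff, coeff_C_mul_X_pow, add_right_inj] at hcoeff
  rw [sum_ite_eq, sum_ite_eq, if_pos (mem_range.2 (by omega)), if_pos (mem_range.2 hj)]
    at hcoeff
  rw [map_sub, hcoeff, sub_self]

section Multilinear

variable {E F : Type*} [NormedAddCommGroup E] [NormedSpace ℝ E]
  [NormedAddCommGroup F] [NormedSpace ℝ F] {k : ℕ}

open ContinuousMultilinearMap

lemma IsSymm.apply_piecewise_eq_lowerSlots {A : E [×k]→L[ℝ] F} (hA : IsSymm A)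
    (S : Finset (Fin k)) (a b : E) :
    A (S.piecewise (fun _ => a) fun _ => b)
      = A ((lowerSlots k #S).piecewise (fun _ => a) fun _ => b) := by
  have hT : #(lowerSlots k #S) = #S :=
    card_lowerSlots ((card_le_univ S).trans_eq (Fintype.card_fin k))
  have hTc : #(lowerSlots k #S)ᶜ = #Sᶜ := by rw [card_compl, card_compl, hT]
  rw [← curryFinFinset_apply_const (rfl : #S = #S) rfl, ← curryFinFinset_apply_const hT hTc,
    curryFinFinset_apply, curryFinFinset_apply]
  simpa using hA ((finSumEquivOfFinset rfl rfl).symm.trans (finSumEquivOfFinset hT hTc))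
    fun i => Sum.elim (fun _ => a) (fun _ => b) ((finSumEquivOfFinset hT hTc).symm i)

lemma map_piecewise_const_smul (A : E [×k]→L[ℝ] F) (S : Finset (Fin k)) (t : ℝ) (a b : E) :
    A (S.piecewise (fun _ => t • a) fun _ => b)
      = t ^ #S • A (S.piecewise (fun _ => a) fun _ => b) := by
  rw [← curryFinFinset_apply_const (rfl : #S = #S) rfl,
    ← curryFinFinset_apply_const (rfl : #S = #S) rfl]
  have := (curryFinFinset ℝ E F (rfl : #S = #S) rfl A).map_smul_univ (fun _ => t) fun _ => a
  simp_all

lemma IsSymm.apply_smul_add {A : E [×k]→L[ℝ] F} (hA : IsSymm A) (t : ℝ) (a b : E) :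
    A (fun _ => t • a + b) = ∑ j ∈ range (k + 1),
      (k.choose j * t ^ j) • A ((lowerSlots k j).piecewise (fun _ => a) fun _ => b) := by
  calc A (fun _ => t • a + b)
      = ∑ S : Finset (Fin k), A (S.piecewise (fun _ => t • a) fun _ => b) :=
        A.map_add_univ _ _
    _ = ∑ S ∈ (univ : Finset (Fin k)).powerset,
          t ^ #S • A ((lowerSlots k #S).piecewise (fun _ => a) fun _ => b) := by
        rw [powerset_univ]
        refine sum_congr rfl fun S _ => ?_
        rw [map_piecewise_const_smul, hA.apply_piecewise_eq_lowerSlots]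
    _ = _ := by
        rw [sum_powerset_apply_card
          (fun j => t ^ j • A ((lowerSlots k j).piecewise (fun _ => a) fun _ => b))]
        simp only [card_univ, Fintype.card_fin]
        refine sum_congr rfl fun j _ => ?_
        rw [← Nat.cast_smul_eq_nsmul ℝ, smul_smul]

lemma IsSymm.polarization {A : E [×k]→L[ℝ] F} (hA : IsSymm A) (v : Fin k → E) :
    (k.factorial : ℝ) • A v
      = ∑ S : Finset (Fin k), (-1 : ℝ) ^ #Sᶜ • A (fun _ => ∑ i ∈ S, v i) := by
  classical
  have hexpand (S : Finset (Fin k)) : A (fun _ => ∑ i ∈ S, v i)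
      = ∑ r : Fin k → Fin k, if ∀ i, r i ∈ S then A (fun i => v (r i)) else 0 := by
    rw [A.map_sum_finset (fun _ => v) (fun _ => S), ← sum_filter]
    congr 1
    ext r
    simp [Fintype.mem_piFinset]
  have hsign (r : Fin k → Fin k) :
      ∑ S : Finset (Fin k), (if ∀ i, r i ∈ S then (-1 : ℝ) ^ #Sᶜ else 0)
        = if Function.Surjective r then 1 else 0 := by
    have hsub (S : Finset (Fin k)) : (∀ i, r i ∈ S) ↔ image r univ ⊆ S := by
      simp [image_subset_iff]
    simp_rw [hsub, ← sum_filter, sum_superset_neg_one_pow_card_compl]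
    exact if_congr (by simp [eq_univ_iff_forall, Function.Surjective]) rfl rfl
  symm
  calc ∑ S : Finset (Fin k), (-1 : ℝ) ^ #Sᶜ • A (fun _ => ∑ i ∈ S, v i)
      = ∑ r : Fin k → Fin k, (∑ S : Finset (Fin k),
          if ∀ i, r i ∈ S then (-1 : ℝ) ^ #Sᶜ else 0) • A (fun i => v (r i)) := by
        simp_rw [hexpand, smul_sum, sum_smul]
        rw [sum_comm]
        simp [ite_smul]
    _ = ∑ σ : Equiv.Perm (Fin k), A (fun i => v (σ i)) := by
        simp_rw [hsign, ite_smul, one_smul, zero_smul, sum_ite_surjective_eq_sum_perm]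
    _ = (k.factorial : ℝ) • A v := by
        simp [hA _ v, card_univ, Fintype.card_perm, ← Nat.cast_smul_eq_nsmul ℝ]

lemma map_const_smul (A : E [×k]→L[ℝ] F) (c : ℝ) (z : E) :
    A (fun _ => c • z) = c ^ k • A (fun _ => z) := by
  simpa using A.map_smul_univ (fun _ => c) fun _ => z

lemma IsSymm.ext_apply_const {A B : E [×k]→L[ℝ] F} (hA : IsSymm A) (hB : IsSymm B)
    (h : ∀ z, A (fun _ => z) = B (fun _ => z)) : A = B := by
  ext v
  apply smul_right_injective F (Nat.cast_ne_zero.2 k.factorial_ne_zero : (k.factorial : ℝ) ≠ 0)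
  simp_rw [hA.polarization, hB.polarization, h]

lemma IsSymm.norm_le {A : E [×k]→L[ℝ] F} (hA : IsSymm A) {M : ℝ}
    (h : ∀ z : E, ‖z‖ ≤ k → ‖A (fun _ => z)‖ ≤ M) : ‖A‖ ≤ 4 ^ k / k.factorial * M := by
  have hM : 0 ≤ M := (norm_nonneg _).trans (h 0 (by simp))
  refine opNorm_le_bound (by positivity) fun v => A.toMultilinearMap.bound_of_shell
    (ε := fun _ => 1) (c := fun _ => (2 : ℝ)) (fun _ => one_pos) (fun _ => by norm_num)
    (fun v hv1 hv2 => ?_) v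
  have hsum (S : Finset (Fin k)) : ‖A (fun _ => ∑ i ∈ S, v i)‖ ≤ M := by
    refine h _ ((norm_sum_le _ _).trans ?_)
    calc ∑ i ∈ S, ‖v i‖ ≤ ∑ _i ∈ S, (1 : ℝ) := sum_le_sum fun i _ => (hv2 i).le
      _ ≤ k := by simpa using (card_le_univ S).trans_eq (Fintype.card_fin k)
  have hpol : (k.factorial : ℝ) * ‖A v‖ ≤ 2 ^ k * M := by
    calc (k.factorial : ℝ) * ‖A v‖ = ‖(k.factorial : ℝ) • A v‖ := by
          rw [norm_smul, RCLike.norm_natCast]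
      _ ≤ ∑ S : Finset (Fin k), ‖A (fun _ => ∑ i ∈ S, v i)‖ := by
          rw [hA.polarization]
          refine (norm_sum_le _ _).trans_eq (sum_congr rfl fun S _ => ?_)
          simp [norm_smul]
      _ ≤ ∑ _S : Finset (Fin k), M := sum_le_sum fun S _ => hsum S
      _ = 2 ^ k * M := by simp [card_univ, Fintype.card_finset]
  have hprod : (2 ^ k)⁻¹ ≤ ∏ i, ‖v i‖ := by
    calc ((2 : ℝ) ^ k)⁻¹ = ∏ _i : Fin k, (2 : ℝ)⁻¹ := by simp
      _ ≤ ∏ i, ‖v i‖ := prod_le_prod (fun _ _ => by positivity) fun i _ => by simpa using hv1 i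
  calc ‖A v‖ ≤ 2 ^ k * M / k.factorial := by
        rw [le_div_iff₀ (by positivity)]
        linarith
    _ = 4 ^ k / k.factorial * M * (2 ^ k)⁻¹ := by
        rw [show (4 : ℝ) ^ k = 2 ^ k * 2 ^ k by rw [← mul_pow]; norm_num]
        field_simp
    _ ≤ 4 ^ k / k.factorial * M * ∏ i, ‖v i‖ := by gcongr

lemma inv_smul_mem_ball {R : ℝ} (hR : 0 < R) {z : E} (hz : ‖z‖ ≤ R) : R⁻¹ • z ∈ Ball E := by
  rw [mem_closedBall_zero_iff, norm_smul, norm_inv, Real.norm_of_nonneg hR.le]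
  exact inv_mul_le_one_of_le₀ hz hR.le

lemma apply_const_eq_pow_smul {A : E [×k]→L[ℝ] F} {f : BoundedContinuousFunction (Ball E) F}
    (hf : ∀ y : Ball E, f y = A fun _ => y) {R : ℝ} (hR : 0 < R) {z : E} (hz : ‖z‖ ≤ R) :
    A (fun _ => z) = R ^ k • f ⟨R⁻¹ • z, inv_smul_mem_ball hR hz⟩ := by
  rw [hf, ← map_const_smul, smul_inv_smul₀ hR.ne']

lemma apply_const_eq_of_forall_ball {A B : E [×k]→L[ℝ] F}
    {f : BoundedContinuousFunction (Ball E) F} (hA : ∀ y : Ball E, f y = A fun _ => y)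
    (hB : ∀ y : Ball E, f y = B fun _ => y) (z : E) : A (fun _ => z) = B (fun _ => z) := by
  have hR : (0 : ℝ) < ‖z‖ + 1 := by positivity
  rw [apply_const_eq_pow_smul hA hR (le_add_of_nonneg_right zero_le_one),
    apply_const_eq_pow_smul hB hR (le_add_of_nonneg_right zero_le_one)]

lemma Represents.unique {A B : E [×k]→L[ℝ] F} {f : BoundedContinuousFunction (Ball E) F}
    (hA : Represents A f) (hB : Represents B f) : A = B :=
  hA.1.ext_apply_const hB.1 (apply_const_eq_of_forall_ball hA.2 hB.2)

lemma Represents.add {A B : E [×k]→L[ℝ] F} {f g : BoundedContinuousFunction (Ball E) F}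
    (hA : Represents A f) (hB : Represents B g) : Represents (A + B) (f + g) :=
  ⟨fun σ v => by simp [hA.1 σ v, hB.1 σ v], fun y => by simp [hA.2 y, hB.2 y]⟩

lemma Represents.smul {A : E [×k]→L[ℝ] F} {f : BoundedContinuousFunction (Ball E) F}
    (c : ℝ) (hA : Represents A f) : Represents (c • A) (c • f) :=
  ⟨fun σ v => by simp [hA.1 σ v], fun y => by simp [hA.2 y]⟩

lemma Represents.norm_le {A : E [×k]→L[ℝ] F} {f : BoundedContinuousFunction (Ball E) F}
    (hA : Represents A f) : ‖A‖ ≤ 4 ^ k / k.factorial * ((k + 1) ^ k * ‖f‖) := by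
  refine hA.1.norm_le fun z hz => ?_
  have hR : (0 : ℝ) < k + 1 := by positivity
  rw [apply_const_eq_pow_smul hA.2 hR (by linarith), norm_smul, norm_pow,
    Real.norm_of_nonneg hR.le]
  gcongr
  exact f.norm_coe_le_norm _

lemma mem_polySet_iff {f : BoundedContinuousFunction (Ball E) F} :
    f ∈ polySet k E F ↔ ∃ A : E [×k]→L[ℝ] F, Represents A f :=
  Iff.rfl

lemma exists_isSymm_apply_const_eq (A : E [×k]→L[ℝ] F) :
    ∃ B : E [×k]→L[ℝ] F, IsSymm B ∧ ∀ z, B (fun _ => z) = A (fun _ => z) := by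
  refine ⟨(k.factorial : ℝ)⁻¹ • ∑ σ : Equiv.Perm (Fin k), A.domDomCongr σ,
    fun τ v => ?_, fun z => ?_⟩
  · simp only [smul_apply, _root_.sum_apply, domDomCongr_apply]
    congr 1
    exact Equiv.sum_comp (Equiv.mulLeft τ) fun σ : Equiv.Perm (Fin k) => A fun i => v (σ i)
  · simp [card_univ, Fintype.card_perm, ← Nat.cast_smul_eq_nsmul ℝ, smul_smul,
      Nat.factorial_ne_zero]

def symmForm : polySet k E F →L[ℝ] E [×k]→L[ℝ] F :=
  LinearMap.mkContinuous
    { toFun := fun P => (mem_polySet_iff.1 P.2).choose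
      map_add' := fun P Q => (mem_polySet_iff.1 (P + Q).2).choose_spec.unique
        ((mem_polySet_iff.1 P.2).choose_spec.add (mem_polySet_iff.1 Q.2).choose_spec)
      map_smul' := fun c P => (mem_polySet_iff.1 (c • P).2).choose_spec.unique
        ((mem_polySet_iff.1 P.2).choose_spec.smul c) }
    (4 ^ k / k.factorial * (k + 1) ^ k)
    fun P => by
      rw [mul_assoc]
      exact (mem_polySet_iff.1 P.2).choose_spec.norm_le

lemma represents_symmForm (P : polySet k E F) : Represents (symmForm P) P :=
  (mem_polySet_iff.1 P.2).choose_spec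

lemma norm_apply_const_le (A : E [×k]→L[ℝ] F) (y : Ball E) : ‖A fun _ => (y : E)‖ ≤ ‖A‖ := by
  have hy : ‖fun _ : Fin k => (y : E)‖ ≤ 1 :=
    (pi_norm_le_iff_of_nonneg zero_le_one).2 fun _ => mem_closedBall_zero_iff.1 y.2
  simpa using A.le_opNorm_mul_pow_card_of_le hy

def toPolySet : (E [×k]→L[ℝ] F) →L[ℝ] polySet k E F :=
  LinearMap.mkContinuous
    { toFun := fun A => ⟨BoundedContinuousFunction.ofNormedAddCommGroup
          (fun y : Ball E => A fun _ => y) (by fun_prop) ‖A‖ (norm_apply_const_le A), by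
        obtain ⟨B, hB, hBA⟩ := exists_isSymm_apply_const_eq A
        exact ⟨B, hB, fun y => (hBA y).symm⟩⟩
      map_add' := fun A B => rfl
      map_smul' := fun c A => rfl }
    1 fun A => by
      rw [one_mul]
      exact BoundedContinuousFunction.norm_ofNormedAddCommGroup_le _ (norm_nonneg A)
        (norm_apply_const_le A)

end Multilinear

section Construction

variable {E F : Type*} [NormedAddCommGroup E] [NormedSpace ℝ E]
  [NormedAddCommGroup F] [NormedSpace ℝ F] (φ : E →L[ℝ] ℝ) (x₀ : E)

open ContinuousMultilinearMap

def fixFirstSlots {j l n : ℕ} (h : j + l = n) : (E [×n]→L[ℝ] F) →L[ℝ] E [×l]→L[ℝ] F :=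
  (ContinuousMultilinearMap.apply ℝ (fun _ : Fin j => E) (E [×l]→L[ℝ] F) fun _ => x₀).comp
    (curryFinFinset ℝ E F (card_lowerSlots (by omega)) (card_compl_lowerSlots h) :
      (E [×n]→L[ℝ] F) →L[ℝ] _)

lemma fixFirstSlots_apply_const {j l n : ℕ} (h : j + l = n) (A : E [×n]→L[ℝ] F) (z : E) :
    fixFirstSlots x₀ h A (fun _ => z) = A ((lowerSlots n j).piecewise (fun _ => x₀) fun _ => z) :=
  curryFinFinset_apply_const _ _ _ _ _

def smulFirstSlots {j l m : ℕ} (h : j + l = m) : (E [×l]→L[ℝ] F) →L[ℝ] E [×m]→L[ℝ] F :=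
  ((curryFinFinset ℝ E F (card_lowerSlots (by omega)) (card_compl_lowerSlots h)).symm :
      _ →L[ℝ] E [×m]→L[ℝ] F).comp
    (smulRightL ℝ (fun _ : Fin j => E) (E [×l]→L[ℝ] F)
      ((ContinuousMultilinearMap.mkPiAlgebra ℝ (Fin j) ℝ).compContinuousLinearMap fun _ => φ))

lemma smulFirstSlots_apply_const {j l m : ℕ} (h : j + l = m) (D : E [×l]→L[ℝ] F) (z : E) :
    smulFirstSlots φ h D (fun _ => z) = φ z ^ j • D (fun _ => z) := by
  simp [smulFirstSlots]

def divPowForm {m n : ℕ} (hmn : m ≤ n) : (E [×n]→L[ℝ] F) →L[ℝ] E [×m]→L[ℝ] F :=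
  ∑ j : Fin (m + 1), (n.choose (n - m + j) : ℝ) •
    (smulFirstSlots φ (Nat.add_sub_of_le (Nat.le_of_lt_succ j.2))).comp
      ((compContinuousLinearMapL fun _ => ContinuousLinearMap.id ℝ E - φ.smulRight x₀).comp
        (fixFirstSlots x₀ (by have := j.2; omega : n - m + j + (m - j) = n)))

lemma divPowForm_apply_const {m n : ℕ} (hmn : m ≤ n) (A : E [×n]→L[ℝ] F) (x : E) :
    divPowForm φ x₀ hmn A (fun _ => x) = ∑ j ∈ range (m + 1), (n.choose (n - m + j) * φ x ^ j) •
      A ((lowerSlots n (n - m + j)).piecewise (fun _ => x₀) fun _ => x - φ x • x₀) := by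
  rw [← Fin.sum_univ_eq_sum_range (fun j => (n.choose (n - m + j) * φ x ^ j) •
      A ((lowerSlots n (n - m + j)).piecewise (fun _ => x₀) fun _ => x - φ x • x₀))]
  simp [divPowForm, smulFirstSlots_apply_const, fixFirstSlots_apply_const, smul_smul]

lemma IsSymm.divPowForm_apply_const_eq {m n : ℕ} (hmn : m ≤ n) (hφ : φ x₀ = 1)
    {A : E [×n]→L[ℝ] F} {B : E [×m]→L[ℝ] F} (hA : IsSymm A) (hB : IsSymm B)
    (hAB : ∀ z, A (fun _ => z) = φ z ^ (n - m) • B (fun _ => z)) (x : E) :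
    divPowForm φ x₀ hmn A (fun _ => x) = B (fun _ => x) := by
  set y := x - φ x • x₀
  have hy : φ y = 0 := by simp [y, hφ]
  set a : ℕ → F := fun i =>
    (n.choose i : ℝ) • A ((lowerSlots n i).piecewise (fun _ => x₀) fun _ => y)
  set b : ℕ → F := fun j =>
    (m.choose j : ℝ) • B ((lowerSlots m j).piecewise (fun _ => x₀) fun _ => y)
  have hline (t : ℝ) :
      ∑ i ∈ range (n + 1), t ^ i • a i = ∑ j ∈ range (m + 1), t ^ (n - m + j) • b j := by
    have h := hA.apply_smul_add t x₀ y
    rw [hAB, map_add, map_smul, hφ, hy, smul_eq_mul, mul_one, add_zero,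
      hB.apply_smul_add, smul_sum] at h
    calc ∑ i ∈ range (n + 1), t ^ i • a i
        = ∑ i ∈ range (n + 1), (n.choose i * t ^ i) •
            A ((lowerSlots n i).piecewise (fun _ => x₀) fun _ => y) :=
          sum_congr rfl fun i _ => by rw [smul_smul, mul_comm]
      _ = ∑ j ∈ range (m + 1), t ^ (n - m) • (m.choose j * t ^ j) •
            B ((lowerSlots m j).piecewise (fun _ => x₀) fun _ => y) := h.symm
      _ = _ := sum_congr rfl fun j _ => by
          rw [smul_smul, smul_smul, pow_add]
          ring_nf
  have hcoeff (j : ℕ) (hj : j < m + 1) : a (n - m + j) = b j :=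
    coeff_eq_of_forall_sum_pow_smul_eq hline (by omega) hj
  calc divPowForm φ x₀ hmn A (fun _ => x)
      = ∑ j ∈ range (m + 1), φ x ^ j • a (n - m + j) := by
        rw [divPowForm_apply_const]
        exact sum_congr rfl fun j _ => by rw [smul_smul, mul_comm]
    _ = ∑ j ∈ range (m + 1), φ x ^ j • b j :=
        sum_congr rfl fun j hj => by rw [hcoeff j (mem_range.1 hj)]
    _ = B (fun _ => φ x • x₀ + y) := by
        simp [hB.apply_smul_add, b, smul_smul, mul_comm]
    _ = B (fun _ => x) := by simp [y]

def mulPowPoly {m n : ℕ} (hmn : m ≤ n) : polySet m E F →L[ℝ] polySet n E F :=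
  toPolySet.comp ((smulFirstSlots φ (Nat.sub_add_cancel hmn)).comp symmForm)

def divPowPoly {m n : ℕ} (hmn : m ≤ n) : polySet n E F →L[ℝ] polySet m E F :=
  toPolySet.comp ((divPowForm φ x₀ hmn).comp symmForm)

lemma divPowPoly_mulPowPoly {m n : ℕ} (hφ : φ x₀ = 1) (hmn : m ≤ n) (P : polySet m E F) :
    divPowPoly φ x₀ hmn (mulPowPoly φ hmn P) = P := by
  have hA := represents_symmForm (mulPowPoly φ hmn P)
  have hB := represents_symmForm P
  have hAB (z : E) : symmForm (mulPowPoly φ hmn P) (fun _ => z)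
      = φ z ^ (n - m) • symmForm P (fun _ => z) := by
    rw [apply_const_eq_of_forall_ball hA.2
      (B := smulFirstSlots φ (Nat.sub_add_cancel hmn) (symmForm P)) (fun _ => rfl) z,
      smulFirstSlots_apply_const]
  ext y
  rw [hB.2 y]
  exact hA.1.divPowForm_apply_const_eq φ x₀ hmn hφ hB.1 hAB y

end Construction

lemma containsComplCopy_of_leftInverse {X Y : Type*} [NormedAddCommGroup X] [NormedSpace ℝ X]
    [NormedAddCommGroup Y] [NormedSpace ℝ Y] (i : X →L[ℝ] Y) (r : Y →L[ℝ] X)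
    (h : ∀ x, r (i x) = x) : ContainsComplCopy X Y := by
  refine ⟨i, ⟨(‖r‖ + 1)⁻¹, by positivity, fun x => ?_⟩, i.comp r,
    fun y => ⟨r y, rfl⟩, ?_⟩
  · rw [inv_mul_le_iff₀ (by positivity)]
    calc ‖x‖ = ‖r (i x)‖ := by rw [h]
      _ ≤ ‖r‖ * ‖i x‖ := r.le_opNorm _
      _ ≤ (‖r‖ + 1) * ‖i x‖ := by gcongr; linarith
  · rintro _ ⟨x, rfl⟩
    simp [h]

end PPV

namespace Stmts
open PPV Metric Filter Topology
open scoped ENNReal NNReal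

theorem stmt1_general (E F : Type*) [NormedAddCommGroup E] [NormedSpace ℝ E]
    [NormedAddCommGroup F] [NormedSpace ℝ F] [Nontrivial E]
    (m n : ℕ) (hmn : m ≤ n) :
    ContainsComplCopy (polySet m E F) (polySet n E F) := by
  obtain ⟨x₀, hx₀⟩ := exists_ne (0 : E)
  obtain ⟨φ, hφ⟩ := SeparatingDual.exists_eq_one (R := ℝ) hx₀
  exact containsComplCopy_of_leftInverse (mulPowPoly φ hmn) (divPowPoly φ x₀ hmn)
    (divPowPoly_mulPowPoly φ x₀ hφ hmn)

theorem stmt1 (E F : Type*) [NormedAddCommGroup E] [NormedSpace ℝ E] [CompleteSpace E]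
    [NormedAddCommGroup F] [NormedSpace ℝ F] [CompleteSpace F] [Nontrivial E]
    (m n : ℕ) (hmn : m ≤ n) :
    ContainsComplCopy (polySet m E F) (polySet n E F) :=
  stmt1_general E F m n hmn

end Stmts
end
end

section
/- Let E and F be real Banach spaces and let k ≥ 2. If C ∈ L_s(E,P(^{k-1}E,F)) is a compact operator (C maps the closed unit ball of E onto a relatively norm-compact subset of P(^{k-1}E,F)), then C(x) ∈ P_wb(^{k-1}E,F) for every x ∈ E. -/
/-
Write `A z` for the symmetric multilinear map of the polynomial `C z`. Symmetry of `C` lets one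
move `x` out of `A x` and into the argument list: telescoping `A x (z,…,z) - A x (y,…,y)` one slot
at a time gives a sum of `k` terms `(A z - A y)(u)` with `u` built from `x, y, z`. By polarization,
`‖(A z - A y)(u)‖ ≤ c_k R^k ‖C z - C y‖` on the ball of radius `R`, so on bounded sets the
polynomial `C x` is controlled by the operator `C`. A compact operator maps bounded weakly
convergent nets to norm convergent ones, hence `C x` is weak-to-norm continuous on bounded sets.
-/

noncomputable section

open Metric Filter Topology
open scoped ENNReal NNReal

open Finset

namespace MultilinearMap

section Polarization

variable {R M N ι : Type*} [CommSemiring R] [AddCommMonoid M] [AddCommGroup N]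
  [Module R M] [Module R N] [Fintype ι] [DecidableEq ι]

theorem sum_comp_surjective_eq (f : MultilinearMap R (fun _ : ι => M) N) (v : ι → M) :
    ∑ r : ι → ι with r.Surjective, f (v ∘ r) =
      ∑ t : Finset ι, (-1 : ℤ) ^ #t • f (fun _ => ∑ i ∈ tᶜ, v i) := by
  let S : ι → Finset (ι → ι) := fun i => {r | i ∉ Set.range r}
  calc ∑ r : ι → ι with r.Surjective, f (v ∘ r)
      = ∑ r ∈ univ.inf fun i => (S i)ᶜ, f (v ∘ r) := by
        congr 1; ext r; rw [mem_filter, Finset.mem_inf]; simp [S, Function.Surjective]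
    _ = ∑ t ∈ univ.powerset, (-1 : ℤ) ^ #t • ∑ r ∈ t.inf S, f (v ∘ r) :=
        inclusion_exclusion_sum_inf_compl _ _ _
    _ = _ := by
        rw [powerset_univ]
        refine sum_congr rfl fun t _ => ?_
        rw [f.map_sum_finset]
        congr 2
        ext r
        simp only [S, Finset.mem_inf, Fintype.mem_piFinset, mem_filter, mem_compl]
        simpa using ⟨fun h a ha => h _ ha a rfl, fun h i hi x hx => h x (hx ▸ hi)⟩

/-- The polarization formula. -/
theorem factorial_smul_eq_sum_powerset (f : MultilinearMap R (fun _ : ι => M) N)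
    (hf : ∀ (σ : Equiv.Perm ι) (v : ι → M), f (v ∘ σ) = f v) (v : ι → M) :
    (Fintype.card ι).factorial • f v =
      ∑ t : Finset ι, (-1 : ℤ) ^ #t • f (fun _ => ∑ i ∈ tᶜ, v i) := by
  rw [← sum_comp_surjective_eq]
  calc (Fintype.card ι).factorial • f v = ∑ σ : Equiv.Perm ι, f (v ∘ σ) := by
        simp [hf, Fintype.card_perm]
    _ = ∑ r : ι → ι with r.Surjective, f (v ∘ r) :=
        sum_bij' (fun σ _ => ⇑σ)
          (fun r hr => Equiv.ofBijective r (mem_filter.1 hr).2.bijective_of_finite)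
          (fun σ _ => mem_filter.2 ⟨mem_univ _, σ.surjective⟩) (fun _ _ => mem_univ _)
          (fun _ _ => Equiv.ext fun _ => rfl) (fun _ _ => rfl) (fun _ _ => rfl)

end Polarization

variable {R M N ι : Type*} [Ring R] [AddCommGroup M] [AddCommGroup N] [Module R M] [Module R N]
  [Fintype ι] [LinearOrder ι]

theorem map_const_sub_map_const_eq_sum (A : M → MultilinearMap R (fun _ : ι => M) N)
    (hA : ∀ (x z : M) (v : ι → M) (i : ι),
      A x (Function.update v i z) = A z (Function.update v i x))
    (x y z : M) :
    A x (fun _ => z) - A x (fun _ => y) =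
      ∑ i, (A z - A y) (Function.update (fun j => if j < i then z else y) i x) := by
  have h := (A x).map_sub_map_piecewise (fun _ => z) (fun _ => y) univ
  rw [piecewise_univ] at h
  rw [h]
  refine sum_congr rfl fun i _ => ?_
  have hv : (fun j => if j ∈ univ → j < i then z else if i = j then z - y else y) =
      Function.update (fun j => if j < i then z else y) i (z - y) := by
    ext j
    rcases lt_trichotomy j i with hj | rfl | hj
    · simp [hj, hj.ne]
    · simp
    · simp [hj.not_gt, hj.ne, hj.ne']
  rw [hv, map_update_sub, hA x z, hA x y, _root_.sub_apply]

end MultilinearMap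

namespace ContinuousMultilinearMap

variable {E F ι : Type*} [NormedAddCommGroup E] [NormedSpace ℝ E]
  [NormedAddCommGroup F] [NormedSpace ℝ F] [Fintype ι]

theorem norm_apply_const_le_of_forall_norm_le_one
    (B : ContinuousMultilinearMap ℝ (fun _ : ι => E) F)
    {M : ℝ} (hM : ∀ w : E, ‖w‖ ≤ 1 → ‖B (fun _ => w)‖ ≤ M) (w : E) :
    ‖B (fun _ => w)‖ ≤ M * ‖w‖ ^ Fintype.card ι := by
  rcases eq_or_ne w 0 with rfl | hw
  · rcases isEmpty_or_nonempty ι with hι | ⟨⟨i⟩⟩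
    · simpa using hM 0 (by simp)
    · rw [B.map_coord_zero (m := fun _ => 0) i rfl, norm_zero, norm_zero,
        zero_pow (Fintype.card_pos_iff.2 ⟨i⟩).ne', mul_zero]
  · have hw' : 0 < ‖w‖ := norm_pos_iff.2 hw
    have hscale : B (fun _ => w) = ‖w‖ ^ Fintype.card ι • B (fun _ => ‖w‖⁻¹ • w) := by
      rw [← card_univ, ← prod_const, ← B.map_smul_univ]
      simp [smul_smul, hw'.ne']
    rw [hscale, norm_smul, norm_pow, norm_norm, mul_comm]
    gcongr
    exact hM _ (by rw [norm_smul, norm_inv, norm_norm, inv_mul_cancel₀ hw'.ne'])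

theorem norm_le_of_isSymm {k : ℕ} (B : ContinuousMultilinearMap ℝ (fun _ : Fin k => E) F)
    (hB : PPV.IsSymm B) {M : ℝ} (hM : ∀ w : E, ‖w‖ ≤ 1 → ‖B (fun _ => w)‖ ≤ M)
    {R : ℝ} (v : Fin k → E) (hv : ∀ i, ‖v i‖ ≤ R) :
    ‖B v‖ ≤ 2 ^ k * (k * R) ^ k / k.factorial * M := by
  have hM0 : 0 ≤ M := (norm_nonneg _).trans (hM 0 (by simp))
  have hsum : ∀ t : Finset (Fin k), ‖∑ i ∈ tᶜ, v i‖ ≤ k * R := fun t =>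
    calc ‖∑ i ∈ tᶜ, v i‖ ≤ ∑ i ∈ tᶜ, ‖v i‖ := norm_sum_le _ _
      _ ≤ ∑ i, ‖v i‖ := sum_le_univ_sum_of_nonneg fun _ => norm_nonneg _
      _ ≤ ∑ _i : Fin k, R := sum_le_sum fun i _ => hv i
      _ = k * R := by simp
  have hpolar := B.toMultilinearMap.factorial_smul_eq_sum_powerset hB v
  rw [Fintype.card_fin] at hpolar
  rw [div_mul_eq_mul_div, le_div_iff₀ (by positivity), mul_comm]
  calc k.factorial * ‖B v‖ = ‖k.factorial • B v‖ := by
        rw [← Nat.cast_smul_eq_nsmul ℝ, norm_smul, Real.norm_natCast]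
    _ = ‖∑ t : Finset (Fin k), (-1 : ℤ) ^ #t • B (fun _ => ∑ i ∈ tᶜ, v i)‖ := by
        simpa using congrArg norm hpolar
    _ ≤ ∑ t : Finset (Fin k), M * (k * R) ^ k := by
        refine norm_sum_le_of_le _ fun t _ => ?_
        rw [norm_zsmul ℝ, Int.cast_pow, Int.cast_neg, Int.cast_one, norm_pow, norm_neg, norm_one,
          one_pow, one_mul]
        calc ‖B (fun _ => ∑ i ∈ tᶜ, v i)‖ ≤ M * ‖∑ i ∈ tᶜ, v i‖ ^ k := by
              simpa using B.norm_apply_const_le_of_forall_norm_le_one hM (∑ i ∈ tᶜ, v i)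
          _ ≤ M * (k * R) ^ k := by gcongr; exact hsum t
    _ = 2 ^ k * (k * R) ^ k * M := by
        rw [sum_const, card_univ, Fintype.card_finset, Fintype.card_fin, nsmul_eq_mul]
        push_cast
        ring

theorem norm_apply_const_sub_apply_const_le [LinearOrder ι]
    (A : E → ContinuousMultilinearMap ℝ (fun _ : ι => E) F)
    (hA : ∀ (x z : E) (v : ι → E) (i : ι),
      A x (Function.update v i z) = A z (Function.update v i x))
    {x y z : E} {R N : ℝ} (hx : ‖x‖ ≤ R) (hy : ‖y‖ ≤ R) (hz : ‖z‖ ≤ R)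
    (hN : ∀ v : ι → E, (∀ i, ‖v i‖ ≤ R) → ‖(A z - A y) v‖ ≤ N) :
    ‖A x (fun _ => z) - A x (fun _ => y)‖ ≤ Fintype.card ι * N := by
  have h := MultilinearMap.map_const_sub_map_const_eq_sum (fun w => (A w).toMultilinearMap) hA x y z
  simp only [coe_coe, _root_.sub_apply] at h
  rw [h, ← nsmul_eq_mul, ← card_univ, ← sum_const]
  refine norm_sum_le_of_le _ fun i _ => ?_
  refine sub_apply (A z) (A y) _ ▸ hN _ fun j => ?_
  rcases eq_or_ne j i with rfl | hj
  · simpa using hx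
  · rw [Function.update_of_ne hj]
    split_ifs
    exacts [hz, hy]

end ContinuousMultilinearMap

theorem ContinuousOn.of_norm_sub_le_mul {X F G : Type*} [TopologicalSpace X]
    [SeminormedAddCommGroup F] [SeminormedAddCommGroup G] {f : X → F} {g : X → G} {s : Set X}
    (hg : ContinuousOn g s) (K : ℝ) (h : ∀ a ∈ s, ∀ b ∈ s, ‖f a - f b‖ ≤ K * ‖g a - g b‖) :
    ContinuousOn f s := by
  intro b hb
  have hgb := (tendsto_iff_norm_sub_tendsto_zero.1 (hg b hb)).const_mul K
  rw [mul_zero] at hgb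
  exact tendsto_iff_norm_sub_tendsto_zero.2 <| squeeze_zero' (.of_forall fun _ => norm_nonneg _)
    (eventually_nhdsWithin_of_forall fun a ha => h a ha b hb) hgb

namespace PPV

variable {E F G : Type*} [NormedAddCommGroup E] [NormedSpace ℝ E]
  [NormedAddCommGroup F] [NormedSpace ℝ F] [NormedAddCommGroup G] [NormedSpace ℝ G]

theorem weakContOnBounded_of_isCompact_closure_image_closedBall (T : E →L[ℝ] G)
    (hT : IsCompact (closure (T '' closedBall 0 1))) : WeakContOnBounded E G T := by
  intro S hS
  obtain ⟨K, hK, hSK⟩ := ((isCompactOperator_iff_isCompact_closure_image_closedBall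
    (T : E →ₗ[ℝ] G) one_pos).2 hT).image_subset_compact_of_bounded hS
  rintro _ ⟨x₀, -, rfl⟩
  refine hK.tendsto_nhds_of_unique_mapClusterPt ?_ fun y _ hy => ?_
  · filter_upwards [self_mem_nhdsWithin] with ξ ⟨x, hx, hξ⟩
    exact hξ ▸ hSK ⟨x, hx, rfl⟩
  -- a cluster point `y` is pinned down by the functionals `φ ∘ T`, which are weakly continuous
  · refine (SeparatingDual.eq_iff_forall_dual_eq (R := ℝ)).2 fun φ => eq_of_nhds_neBot ?_
    have hφ : Tendsto (fun ξ => φ (T ((toWeakSpace ℝ E).symm ξ)))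
        (𝓝[toWeakSpace ℝ E '' S] toWeakSpace ℝ E x₀) (𝓝 (φ (T x₀))) :=
      ((WeakBilin.eval_continuous _ (φ.comp T)).tendsto _).mono_left nhdsWithin_le_nhds
    have hφy : MapClusterPt (φ y) (𝓝[toWeakSpace ℝ E '' S] toWeakSpace ℝ E x₀)
        (fun ξ => φ (T ((toWeakSpace ℝ E).symm ξ))) := hy.tendsto_comp (φ.continuous.tendsto y)
    exact hφy.neBot.mono (inf_le_inf_left _ hφ)

variable {k : ℕ} {A B : ContinuousMultilinearMap ℝ (fun _ : Fin k => E) F}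
  {f g : BoundedContinuousFunction (Ball E) F}

theorem Represents.sub (hA : Represents A f) (hB : Represents B g) :
    Represents (A - B) (f - g) :=
  ⟨fun σ v => by simp [hA.1 σ v, hB.1 σ v], fun y => by simp [hA.2 y, hB.2 y]⟩

theorem Represents.norm_apply_le (hA : Represents A f) {R : ℝ} (v : Fin k → E)
    (hv : ∀ i, ‖v i‖ ≤ R) : ‖A v‖ ≤ 2 ^ k * (k * R) ^ k / k.factorial * ‖f‖ :=
  A.norm_le_of_isSymm hA.1 (fun w hw => by
    rw [← hA.2 ⟨w, by simpa using hw⟩]; exact f.norm_coe_le_norm _) v hv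

end PPV

namespace Stmts
open PPV Metric Filter Topology
open scoped ENNReal NNReal

theorem stmt3_general (E F : Type*) [NormedAddCommGroup E] [NormedSpace ℝ E]
    [NormedAddCommGroup F] [NormedSpace ℝ F] (j : ℕ)
    (C : E →L[ℝ] polySet (j + 1) E F) (hsym : IsSymmOp C)
    (hcpt : IsCompact (closure ((fun x => C x) '' Metric.closedBall (0 : E) 1))) :
    ∀ x : E, (C x : BoundedContinuousFunction (Ball E) F) ∈ polyWbSet (j + 1) E F := by
  intro x
  choose A hA using fun z => (C z).2
  refine ⟨A x, hA x, fun S hS => ?_⟩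
  obtain ⟨M, hM⟩ := hS.subset_closedBall 0
  set R := max M ‖x‖
  have hR : ∀ z ∈ S, ‖z‖ ≤ R := fun z hz =>
    (mem_closedBall_zero_iff.1 (hM hz)).trans (le_max_left _ _)
  refine (weakContOnBounded_of_isCompact_closure_image_closedBall C hcpt S hS).of_norm_sub_le_mul
    ((j + 1 : ℕ) * (2 ^ (j + 1) * ((j + 1 : ℕ) * R) ^ (j + 1) / (j + 1).factorial)) ?_
  rintro _ ⟨z, hz, rfl⟩ _ ⟨y, hy, rfl⟩
  rw [mul_assoc]
  simpa using ContinuousMultilinearMap.norm_apply_const_sub_apply_const_le A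
    (fun x z => hsym x z _ _ (hA x) (hA z)) (le_max_right _ _) (hR y hy) (hR z hz)
    fun v hv => ((hA z).sub (hA y)).norm_apply_le v hv

theorem stmt3 (E F : Type*) [NormedAddCommGroup E] [NormedSpace ℝ E] [CompleteSpace E]
    [NormedAddCommGroup F] [NormedSpace ℝ F] [CompleteSpace F] (j : ℕ)
    (C : E →L[ℝ] polySet (j + 1) E F) (hsym : IsSymmOp C)
    (hcpt : IsCompact (closure ((fun x => C x) '' Metric.closedBall (0 : E) 1))) :
    ∀ x : E, (C x : BoundedContinuousFunction (Ball E) F) ∈ polyWbSet (j + 1) E F :=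
  stmt3_general E F j C hsym hcpt

end Stmts
end
end

section
/- Let 1 < p, q < ∞ and k ≥ 2 with kq > p. Define J : ℓ∞ → P(^kℓ_p, ℓ_q) by J(ξ)(x) = (ξ_i x_i^k)_{i=1}^∞ for ξ = (ξ_i) ∈ ℓ∞ and x = (x_i) ∈ ℓ_p. Then J is a well-defined linear isometric embedding: for every ξ ∈ ℓ∞, J(ξ) is a continuous k-homogeneous polynomial from ℓ_p into ℓ_q and ‖J(ξ)‖ = ‖ξ‖_∞. In particular, P(^kℓ_p,ℓ_q) contains an isometric copy of ℓ∞. -/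
noncomputable section

open Metric Filter Topology
open scoped ENNReal NNReal

/-! `J ξ` is the diagonal of the symmetric `k`-linear map `(v₁, …, v_k) ↦ (ξᵢ v₁(i) ⋯ v_k(i))ᵢ`.
By AM-GM, `|ξᵢ v₁(i) ⋯ v_k(i)|^q ≤ ‖ξ‖^q · (1/k) ∑ₘ |vₘ(i)|^{kq}`, and since `kq ≥ p` every unit
vector `v` of `ℓ_p` has `∑ᵢ |v(i)|^{kq} ≤ 1`. Summing over `i` shows that the multilinear map
sends `ℓ_p` into `ℓ_q` and has norm at most `‖ξ‖` on unit vectors, hence `‖J ξ‖ ≤ ‖ξ‖`;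
evaluating `J ξ` at the unit vectors `eₙ` gives `|ξₙ| ≤ ‖J ξ‖`. -/

theorem Real.prod_rpow_le_sum_rpow_div_card {ι : Type*} [Fintype ι] [Nonempty ι]
    (x : ι → ℝ) (hx : ∀ i, 0 ≤ x i) (s : ℝ) :
    ∏ i, x i ^ s ≤ (∑ i, x i ^ (Fintype.card ι * s)) / Fintype.card ι := by
  have hn : (Fintype.card ι : ℝ) ≠ 0 := Nat.cast_ne_zero.mpr Fintype.card_ne_zero
  have amgm := Real.geom_mean_le_arith_mean_weighted Finset.univ (fun _ => (Fintype.card ι : ℝ)⁻¹)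
    (fun i => x i ^ (Fintype.card ι * s)) (fun _ _ => by positivity)
    (by simp [Finset.card_univ, hn]) (fun i _ => by have := hx i; positivity)
  have hroot : ∀ i, (x i ^ (Fintype.card ι * s)) ^ (Fintype.card ι : ℝ)⁻¹ = x i ^ s := fun i => by
    rw [← Real.rpow_mul (hx i), mul_comm, inv_mul_cancel_left₀ hn]
  simpa only [hroot, Finset.sum_div, inv_mul_eq_div] using amgm

theorem MultilinearMap.norm_map_le_of_forall_norm_le_one {𝕜 ι : Type*} [RCLike 𝕜] [Fintype ι]
    {E : ι → Type*} [∀ i, NormedAddCommGroup (E i)] [∀ i, NormedSpace 𝕜 (E i)]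
    {G : Type*} [NormedAddCommGroup G] [NormedSpace 𝕜 G] (f : MultilinearMap 𝕜 E G) {C : ℝ}
    (hf : ∀ m : ∀ i, E i, (∀ i, ‖m i‖ ≤ 1) → ‖f m‖ ≤ C) (m : ∀ i, E i) :
    ‖f m‖ ≤ C * ∏ i, ‖m i‖ := by
  by_cases! hm : ∃ i, m i = 0
  · obtain ⟨i, hi⟩ := hm
    simp [f.map_coord_zero i hi, Finset.prod_eq_zero (Finset.mem_univ i), hi]
  have hunit : ∀ i, ‖(‖m i‖⁻¹ : 𝕜) • m i‖ ≤ 1 := fun i => (norm_smul_inv_norm (hm i)).le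
  have hscale : m = fun i => (‖m i‖ : 𝕜) • (‖m i‖⁻¹ : 𝕜) • m i := funext fun i => by
    rw [smul_smul, ← RCLike.ofReal_inv, ← RCLike.ofReal_mul,
      mul_inv_cancel₀ (norm_ne_zero_iff.mpr (hm i)), RCLike.ofReal_one, one_smul]
  calc ‖f m‖ = (∏ i, ‖m i‖) * ‖f fun i => (‖m i‖⁻¹ : 𝕜) • m i‖ := by
        conv_lhs => rw [hscale, f.map_smul_univ]
        simp [norm_smul]
    _ ≤ (∏ i, ‖m i‖) * C := by gcongr; exact hf _ hunit
    _ = C * ∏ i, ‖m i‖ := mul_comm _ _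

namespace lp

theorem tsum_norm_rpow_le_one {α : Type*} {E : α → Type*} [∀ i, NormedAddCommGroup (E i)]
    {p r : ℝ≥0∞} (hp : p ≠ 0) (hpr : p ≤ r) (hr : r ≠ ⊤) (x : lp E p) (hx : ‖x‖ ≤ 1) :
    ∑' i, ‖x i‖ ^ r.toReal ≤ 1 := by
  have hp' : 0 < p.toReal := ENNReal.toReal_pos hp (ne_top_of_le_ne_top hr hpr)
  have hpr' : p.toReal ≤ r.toReal := ENNReal.toReal_mono hr hpr
  calc ∑' i, ‖x i‖ ^ r.toReal ≤ ∑' i, ‖x i‖ ^ p.toReal := by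
        refine Summable.tsum_le_tsum (fun i => ?_) (((lp.memℓp x).of_exponent_ge hpr).summable
          (hp'.trans_le hpr')) ((lp.memℓp x).summable hp')
        exact Real.rpow_le_rpow_of_exponent_ge' (norm_nonneg _)
          ((lp.norm_apply_le_norm hp x i).trans hx) hp'.le hpr'
    _ = ‖x‖ ^ p.toReal := (lp.norm_rpow_eq_tsum hp' x).symm
    _ ≤ 1 := Real.rpow_le_one (lp.norm_nonneg' x) hx hp'.le

variable {α ι : Type*} [Fintype ι] [Nonempty ι] {p q : ℝ≥0∞}

theorem norm_mul_prod_rpow_le (ξ : lp (fun _ : α => ℝ) ∞) (v : ι → lp (fun _ : α => ℝ) p)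
    (i : α) {s : ℝ} (hs : 0 ≤ s) :
    ‖ξ i * ∏ m, v m i‖ ^ s
      ≤ ‖ξ‖ ^ s * ((∑ m, ‖v m i‖ ^ (Fintype.card ι * s)) / Fintype.card ι) := by
  rw [norm_mul, norm_prod, Real.mul_rpow (norm_nonneg _) (by positivity),
    ← Real.finsetProd_rpow _ _ fun _ _ => norm_nonneg _]
  gcongr
  · exact lp.norm_apply_le_norm ENNReal.top_ne_zero ξ i
  · exact Real.prod_rpow_le_sum_rpow_div_card _ (fun _ => norm_nonneg _) s

theorem summable_norm_rpow_card_mul (hq : 0 < q.toReal) (hpq : p ≤ Fintype.card ι * q)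
    (x : lp (fun _ : α => ℝ) p) :
    Summable fun i => ‖x i‖ ^ (Fintype.card ι * q.toReal) := by
  have hr : 0 < ((Fintype.card ι : ℝ≥0∞) * q).toReal := by
    rw [ENNReal.toReal_mul, ENNReal.toReal_natCast]
    exact mul_pos (Nat.cast_pos.mpr Fintype.card_pos) hq
  simpa only [ENNReal.toReal_mul, ENNReal.toReal_natCast] using
    ((lp.memℓp x).of_exponent_ge hpq).summable hr

theorem memℓp_mul_prod (hq : 0 < q.toReal) (hpq : p ≤ Fintype.card ι * q)
    (ξ : lp (fun _ : α => ℝ) ∞) (v : ι → lp (fun _ : α => ℝ) p) :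
    Memℓp (fun i => ξ i * ∏ m, v m i) q := by
  refine memℓp_gen <| Summable.of_nonneg_of_le (fun _ => by positivity)
    (fun i => norm_mul_prod_rpow_le ξ v i hq.le) ?_
  exact ((summable_sum fun m _ =>
    summable_norm_rpow_card_mul hq hpq (v m)).div_const _).mul_left _

def weightedProd (hq : 0 < q.toReal) (hpq : p ≤ Fintype.card ι * q)
    (ξ : lp (fun _ : α => ℝ) ∞) :
    MultilinearMap ℝ (fun _ : ι => lp (fun _ : α => ℝ) p) (lp (fun _ : α => ℝ) q) where
  toFun v := ⟨fun i => ξ i * ∏ m, v m i, memℓp_mul_prod hq hpq ξ v⟩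
  map_update_add' v m x y := by
    ext i
    change ξ i * ∏ n, Function.update v m (x + y) n i
      = ξ i * ∏ n, Function.update v m x n i + ξ i * ∏ n, Function.update v m y n i
    simp only [Function.apply_update (fun _ (w : lp _ p) => w i), AddSubgroup.coe_add,
      PreLp.add_apply, Finset.mem_univ, Finset.prod_update_of_mem]
    ring
  map_update_smul' v m c x := by
    ext i
    simp only [Function.apply_update (fun _ (w : lp _ p) => w i), coeFn_smul, Pi.smul_apply,
      smul_eq_mul, Finset.mem_univ, Finset.prod_update_of_mem]
    ring

theorem weightedProd_apply (hq : 0 < q.toReal) (hpq : p ≤ Fintype.card ι * q)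
    (ξ : lp (fun _ : α => ℝ) ∞) (v : ι → lp (fun _ : α => ℝ) p) (i : α) :
    weightedProd hq hpq ξ v i = ξ i * ∏ m, v m i :=
  rfl

theorem norm_weightedProd_le_of_norm_le_one (hp : p ≠ 0) (hq : 0 < q.toReal)
    (hpq : p ≤ Fintype.card ι * q) (ξ : lp (fun _ : α => ℝ) ∞) (v : ι → lp (fun _ : α => ℝ) p)
    (hv : ∀ m, ‖v m‖ ≤ 1) : ‖weightedProd hq hpq ξ v‖ ≤ ‖ξ‖ := by
  have hr : ((Fintype.card ι : ℝ≥0∞) * q).toReal = Fintype.card ι * q.toReal := by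
    rw [ENNReal.toReal_mul, ENNReal.toReal_natCast]
  have hunit : ∀ m, ∑' i, ‖v m i‖ ^ (Fintype.card ι * q.toReal) ≤ 1 := fun m => by
    have hr_ne_top : (Fintype.card ι : ℝ≥0∞) * q ≠ ⊤ :=
      ENNReal.mul_ne_top (ENNReal.natCast_ne_top _) (ENNReal.toReal_pos_iff.mp hq).2.ne
    simpa only [hr] using tsum_norm_rpow_le_one hp hpq hr_ne_top (v m) (hv m)
  refine lp.norm_le_of_tsum_le hq (lp.norm_nonneg' ξ) ?_
  calc ∑' i, ‖ξ i * ∏ m, v m i‖ ^ q.toReal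
      ≤ ∑' i, ‖ξ‖ ^ q.toReal
          * ((∑ m, ‖v m i‖ ^ (Fintype.card ι * q.toReal)) / Fintype.card ι) :=
        ((memℓp_mul_prod hq hpq ξ v).summable hq).tsum_le_tsum
          (fun i => norm_mul_prod_rpow_le ξ v i hq.le)
          (((summable_sum fun m _ =>
            summable_norm_rpow_card_mul hq hpq (v m)).div_const _).mul_left _)
    _ = ‖ξ‖ ^ q.toReal
          * ((∑ m, ∑' i, ‖v m i‖ ^ (Fintype.card ι * q.toReal)) / Fintype.card ι) := by
        rw [tsum_mul_left, tsum_div_const,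
          Summable.tsum_finsetSum fun m _ => summable_norm_rpow_card_mul hq hpq (v m)]
    _ ≤ ‖ξ‖ ^ q.toReal * ((∑ _m : ι, (1 : ℝ)) / Fintype.card ι) := by
        gcongr with m
        exact hunit m
    _ = ‖ξ‖ ^ q.toReal := by simp

theorem norm_weightedProd_le [Fact (1 ≤ p)] [Fact (1 ≤ q)] (hq : 0 < q.toReal)
    (hpq : p ≤ Fintype.card ι * q) (ξ : lp (fun _ : α => ℝ) ∞) (v : ι → lp (fun _ : α => ℝ) p) :
    ‖weightedProd hq hpq ξ v‖ ≤ ‖ξ‖ * ∏ m, ‖v m‖ :=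
  MultilinearMap.norm_map_le_of_forall_norm_le_one _
    (norm_weightedProd_le_of_norm_le_one (zero_lt_one.trans_le Fact.out).ne' hq hpq ξ) v

def weightedProdₗ [Fact (1 ≤ p)] [Fact (1 ≤ q)] (hq : 0 < q.toReal)
    (hpq : p ≤ Fintype.card ι * q) :
    lp (fun _ : α => ℝ) ∞ →ₗ[ℝ]
      ContinuousMultilinearMap ℝ (fun _ : ι => lp (fun _ : α => ℝ) p) (lp (fun _ : α => ℝ) q) where
  toFun ξ := (weightedProd hq hpq ξ).mkContinuous ‖ξ‖ (norm_weightedProd_le hq hpq ξ)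
  map_add' ξ η := by
    ext v i
    simp [weightedProd_apply, add_mul]
  map_smul' c ξ := by
    ext v i
    simp [weightedProd_apply, mul_assoc]

theorem weightedProdₗ_apply [Fact (1 ≤ p)] [Fact (1 ≤ q)] (hq : 0 < q.toReal)
    (hpq : p ≤ Fintype.card ι * q) (ξ : lp (fun _ : α => ℝ) ∞)
    (v : ι → lp (fun _ : α => ℝ) p) (i : α) :
    weightedProdₗ hq hpq ξ v i = ξ i * ∏ m, v m i :=
  rfl

theorem norm_weightedProdₗ_le [Fact (1 ≤ p)] [Fact (1 ≤ q)] (hq : 0 < q.toReal)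
    (hpq : p ≤ Fintype.card ι * q) (ξ : lp (fun _ : α => ℝ) ∞) :
    ‖weightedProdₗ hq hpq ξ‖ ≤ ‖ξ‖ :=
  MultilinearMap.mkContinuous_norm_le _ (lp.norm_nonneg' ξ) (norm_weightedProd_le hq hpq ξ)

end lp

namespace PPV

theorem norm_map_diagonal_le {k : ℕ} {E F : Type*} [NormedAddCommGroup E] [NormedSpace ℝ E]
    [NormedAddCommGroup F] [NormedSpace ℝ F]
    (A : ContinuousMultilinearMap ℝ (fun _ : Fin k => E) F) (y : Ball E) :
    ‖A fun _ => (y : E)‖ ≤ ‖A‖ :=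
  A.unit_le_opNorm ((pi_norm_le_iff_of_nonneg zero_le_one).mpr fun _ =>
    mem_closedBall_zero_iff.mp y.2)

def diagonalRestrict (k : ℕ) (E F : Type*) [NormedAddCommGroup E] [NormedSpace ℝ E]
    [NormedAddCommGroup F] [NormedSpace ℝ F] :
    ContinuousMultilinearMap ℝ (fun _ : Fin k => E) F →ₗ[ℝ]
      BoundedContinuousFunction (Ball E) F where
  toFun A := BoundedContinuousFunction.ofNormedAddCommGroup (fun y => A fun _ => (y : E))
    (A.cont.comp (continuous_pi fun _ => continuous_subtype_val)) ‖A‖ (norm_map_diagonal_le A)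
  map_add' _ _ := rfl
  map_smul' _ _ := rfl

variable {k : ℕ} {E F : Type*} [NormedAddCommGroup E] [NormedSpace ℝ E]
    [NormedAddCommGroup F] [NormedSpace ℝ F]

theorem diagonalRestrict_apply (A : ContinuousMultilinearMap ℝ (fun _ : Fin k => E) F)
    (y : Ball E) : diagonalRestrict k E F A y = A fun _ => (y : E) :=
  rfl

theorem norm_diagonalRestrict_le (A : ContinuousMultilinearMap ℝ (fun _ : Fin k => E) F) :
    ‖diagonalRestrict k E F A‖ ≤ ‖A‖ :=
  BoundedContinuousFunction.norm_ofNormedAddCommGroup_le _ (norm_nonneg A)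
    (norm_map_diagonal_le A)

theorem diagonalRestrict_mem_polySet {A : ContinuousMultilinearMap ℝ (fun _ : Fin k => E) F}
    (hA : IsSymm A) : diagonalRestrict k E F A ∈ polySet k E F :=
  ⟨A, hA, fun _ => rfl⟩

variable {α : Type*} {p q : ℝ≥0∞} [Fact (1 ≤ p)] [Fact (1 ≤ q)] [NeZero k]

theorem isSymm_weightedProdₗ (hq : 0 < q.toReal) (hpq : p ≤ Fintype.card (Fin k) * q)
    (ξ : lp (fun _ : α => ℝ) ∞) : IsSymm (lp.weightedProdₗ hq hpq ξ) := fun σ v => by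
  ext i
  exact congrArg (ξ i * ·) (Equiv.prod_comp σ fun m => v m i)

theorem norm_le_norm_diagonalRestrict_weightedProdₗ (hq : 0 < q.toReal)
    (hpq : p ≤ Fintype.card (Fin k) * q) (ξ : lp (fun _ : α => ℝ) ∞) :
    ‖ξ‖ ≤ ‖diagonalRestrict k _ _ (lp.weightedProdₗ hq hpq ξ)‖ := by
  classical
  refine lp.norm_le_of_forall_le (norm_nonneg _) fun n => ?_
  have he : lp.single p n (1 : ℝ) ∈ Ball (lp (fun _ : α => ℝ) p) := by
    rw [mem_closedBall_zero_iff, lp.norm_single (zero_lt_one.trans_le Fact.out), norm_one]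
  calc ‖ξ n‖ = ‖diagonalRestrict k _ _ (lp.weightedProdₗ hq hpq ξ) ⟨_, he⟩ n‖ := by
        simp [diagonalRestrict_apply, lp.weightedProdₗ_apply]
    _ ≤ ‖diagonalRestrict k _ _ (lp.weightedProdₗ hq hpq ξ) ⟨_, he⟩‖ :=
        lp.norm_apply_le_norm (zero_lt_one.trans_le Fact.out).ne' _ n
    _ ≤ ‖diagonalRestrict k _ _ (lp.weightedProdₗ hq hpq ξ)‖ :=
        BoundedContinuousFunction.norm_coe_le_norm _ _

end PPV

namespace Stmts
open PPV Metric Filter Topology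
open scoped ENNReal NNReal

theorem stmt17_general (p q : ℝ≥0∞) [Fact (1 ≤ p)] [Fact (1 ≤ q)]
    (hq' : q ≠ ⊤)
    (j : ℕ) (hkq : p < (j + 2 : ℝ≥0∞) * q) :
    ∃ J : Linf →ₗ[ℝ] polySet (j + 2) (Lp' p) (Lp' q),
      (∀ (ξ : Linf) (y : Ball (Lp' p)) (i : ℕ),
        (J ξ : BoundedContinuousFunction (Ball (Lp' p)) (Lp' q)) y i
          = ξ i * ((y : Lp' p) i) ^ (j + 2)) ∧
      ∀ ξ : Linf, ‖J ξ‖ = ‖ξ‖ := by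
  have hq : 0 < q.toReal := ENNReal.toReal_pos (zero_lt_one.trans_le Fact.out).ne' hq'
  have hpq : p ≤ Fintype.card (Fin (j + 2)) * q := by simpa using hkq.le
  refine ⟨((diagonalRestrict (j + 2) _ _).comp (lp.weightedProdₗ hq hpq)).codRestrict _
      fun ξ => diagonalRestrict_mem_polySet (isSymm_weightedProdₗ hq hpq ξ),
    fun ξ y i => ?_, fun ξ => le_antisymm ?_ ?_⟩
  · simp [diagonalRestrict_apply, lp.weightedProdₗ_apply]
  · exact (norm_diagonalRestrict_le _).trans (lp.norm_weightedProdₗ_le hq hpq ξ)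
  · exact norm_le_norm_diagonalRestrict_weightedProdₗ hq hpq ξ

theorem stmt17 (p q : ℝ≥0∞) [Fact (1 ≤ p)] [Fact (1 ≤ q)]
    (hp : 1 < p) (hp' : p ≠ ⊤) (hq : 1 < q) (hq' : q ≠ ⊤)
    (j : ℕ) (hkq : p < (j + 2 : ℝ≥0∞) * q) :
    ∃ J : Linf →ₗ[ℝ] polySet (j + 2) (Lp' p) (Lp' q),
      (∀ (ξ : Linf) (y : Ball (Lp' p)) (i : ℕ),
        (J ξ : BoundedContinuousFunction (Ball (Lp' p)) (Lp' q)) y i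
          = ξ i * ((y : Lp' p) i) ^ (j + 2)) ∧
      ∀ ξ : Linf, ‖J ξ‖ = ‖ξ‖ :=
  stmt17_general p q hq' j hkq

end Stmts
end
end

section
/- Let 1 < p, q < ∞ and k ≥ 1. Then the space P_wb(^kℓ_p,ℓ_q) is separable; in particular, it contains no copy of ℓ∞. -/
noncomputable section

open Metric Filter Topology
open scoped ENNReal NNReal

/-!
Every `P ∈ P_wb(^kℓ_p, ℓ_q)` is determined by its values on the closed unit ball `B` of `ℓ_p`,
where it is weak-to-norm continuous. For `1 < p < ∞` the weak topology on `B` is coarser than the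
topology of coordinatewise convergence: a functional `φ` is represented by a sequence `y ∈ ℓ_p'`,
and by Hölder's inequality the truncations `∑_{i ∈ s} xᵢ yᵢ` converge to `φ x` uniformly on `B`.
In coordinates `B` is a closed subset of `[-1, 1]^ℕ`, hence a compact metrizable space `K`, and
restriction embeds `P_wb(^kℓ_p, ℓ_q)` isometrically into `C(K, ℓ_q)`, which is separable. A
separable space contains no copy of `ℓ∞`, whose indicator vectors form an uncountable family at
mutual distance `1`.
-/

open TopologicalSpace

section LinftyNotSeparable

variable {ι : Type*}

def lpIndicator (S : Set ι) : lp (fun _ : ι => ℝ) ∞ :=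
  ⟨S.indicator 1, memℓp_infty ⟨1, by
    rintro _ ⟨i, rfl⟩
    by_cases h : i ∈ S <;> simp [h]⟩⟩

theorem one_le_dist_lpIndicator {S T : Set ι} (h : S ≠ T) :
    1 ≤ dist (lpIndicator S) (lpIndicator T) := by
  obtain ⟨i, hi⟩ : ∃ i, ¬(i ∈ S ↔ i ∈ T) := by
    by_contra! hST
    exact h (Set.ext hST)
  rw [dist_eq_norm]
  refine le_trans ?_ (lp.norm_apply_le_norm ENNReal.top_ne_zero (lpIndicator S - lpIndicator T) i)
  have hdiff : (lpIndicator S - lpIndicator T) i = S.indicator 1 i - T.indicator 1 i := rfl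
  rw [hdiff]
  by_cases hS : i ∈ S <;> by_cases hT : i ∈ T <;> simp_all

theorem not_separableSpace_lp_top [Infinite ι] : ¬ SeparableSpace (lp (fun _ : ι => ℝ) ∞) := by
  intro
  have : Countable (Set ι) :=
    Pairwise.countable_of_isOpen_disjoint (s := fun S => ball (lpIndicator S) (1 / 2))
      (fun S T h => ball_disjoint_ball (by linarith [one_le_dist_lpIndicator h]))
      (fun _ => isOpen_ball) (fun _ => nonempty_ball.2 (by norm_num))
  obtain ⟨f, hf⟩ := exists_injective_nat (Set ι)
  exact Function.cantor_injective _ ((Infinite.natEmbedding ι).injective.comp hf)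

end LinftyNotSeparable

section LpSeparable

theorem lp_single_eq_smul_single_one {ι : Type*} [DecidableEq ι] {p : ℝ≥0∞} (i : ι) (c : ℝ) :
    lp.single (E := fun _ : ι => ℝ) p i c = c • lp.single p i 1 := by
  rw [← lp.single_smul, smul_eq_mul, mul_one]

theorem secondCountableTopology_lp {ι : Type*} [Countable ι] {p : ℝ≥0∞} [Fact (1 ≤ p)]
    (hp : p ≠ ∞) :
    SecondCountableTopology (lp (fun _ : ι => ℝ) p) := by
  suffices SeparableSpace (lp (fun _ : ι => ℝ) p) from
    UniformSpace.secondCountable_of_separable _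
  classical
  rw [← isSeparable_univ_iff]
  have hspan := (Set.countable_range fun i => lp.single (E := fun _ : ι => ℝ) p i 1).isSeparable
  refine (hspan.span (R := ℝ)).closure.mono fun f _ => ?_
  refine mem_closure_of_tendsto (lp.hasSum_single hp f) (Eventually.of_forall fun s => ?_)
  refine Submodule.sum_mem _ fun i _ => ?_
  rw [lp_single_eq_smul_single_one]
  exact Submodule.smul_mem _ _ (Submodule.subset_span ⟨i, rfl⟩)

end LpSeparable

section CoordinateBall

variable {ι : Type*} {p : ℝ≥0∞} [Fact (1 ≤ p)]

def lpCoordBall (ι : Type*) (p : ℝ≥0∞) [Fact (1 ≤ p)] : Set (ι → ℝ) :=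
  (fun x : lp (fun _ : ι => ℝ) p => (x : ι → ℝ)) '' closedBall 0 1

theorem isClosed_lpCoordBall : IsClosed (lpCoordBall ι p) := by
  refine isClosed_of_closure_subset fun x hx => ?_
  let F : closedBall (0 : lp (fun _ : ι => ℝ) p) 1 → lp (fun _ : ι => ℝ) p := Subtype.val
  have : (comap (fun f => (F f : ι → ℝ)) (𝓝 x)).NeBot :=
    comap_neBot_iff_frequently.2 (mem_closure_iff_frequently.1 (Set.image_eq_range _ _ ▸ hx))
  have hF : Tendsto (fun f => (F f : ι → ℝ)) (comap (fun f => (F f : ι → ℝ)) (𝓝 x)) (𝓝 x) :=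
    tendsto_comap
  have hbdd : Bornology.IsBounded (Set.range F) :=
    isBounded_closedBall.subset Subtype.range_val_subtype.subset
  refine ⟨⟨x, lp.memℓp_of_tendsto hbdd hF⟩, mem_closedBall_zero_iff.2 ?_, rfl⟩
  exact lp.norm_le_of_tendsto (Eventually.of_forall fun f => mem_closedBall_zero_iff.1 f.2) hF

theorem isCompact_lpCoordBall : IsCompact (lpCoordBall ι p) := by
  refine (isCompact_univ_pi fun _ => isCompact_closedBall (0 : ℝ) 1).of_isClosed_subset
    isClosed_lpCoordBall ?_
  rintro _ ⟨f, hf, rfl⟩ i -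
  exact mem_closedBall_zero_iff.2
    ((lp.norm_apply_le_norm (zero_lt_one.trans_le Fact.out).ne' f i).trans
      (mem_closedBall_zero_iff.1 hf))

def lpCoordBallEquiv : closedBall (0 : lp (fun _ : ι => ℝ) p) 1 ≃ lpCoordBall ι p :=
  Equiv.Set.image _ _ fun _ _ => lp.ext

theorem coe_lpCoordBallEquiv_symm (x : lpCoordBall ι p) :
    ((lpCoordBallEquiv.symm x).1 : ι → ℝ) = x :=
  congrArg Subtype.val (lpCoordBallEquiv.apply_symm_apply x)

end CoordinateBall

section DualCoeff

variable {ι : Type*} [DecidableEq ι] {p : ℝ≥0∞} [Fact (1 ≤ p)]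

def dualCoeff (φ : StrongDual ℝ (lp (fun _ : ι => ℝ) p)) (i : ι) : ℝ :=
  φ (lp.single p i 1)

theorem hasSum_mul_dualCoeff (hp : p ≠ ∞) (φ : StrongDual ℝ (lp (fun _ : ι => ℝ) p))
    (x : lp (fun _ : ι => ℝ) p) : HasSum (fun i => x i * dualCoeff φ i) (φ x) := by
  refine ((lp.hasSum_single hp x).mapL φ).congr_fun fun i => ?_
  rw [lp_single_eq_smul_single_one, map_smul, smul_eq_mul, dualCoeff]

theorem sum_abs_dualCoeff_rpow_le {r : ℝ} (hpr : p.toReal.HolderConjugate r)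
    (φ : StrongDual ℝ (lp (fun _ : ι => ℝ) p)) (s : Finset ι) :
    ∑ i ∈ s, |dualCoeff φ i| ^ r ≤ ‖φ‖ ^ r := by
  set y := dualCoeff φ
  set M := ∑ i ∈ s, |y i| ^ r
  have hM : 0 ≤ M := by positivity
  -- `z` attains equality in Hölder's inequality against `y`
  set z := ∑ i ∈ s, lp.single p i ((SignType.sign (y i) : ℝ) * |y i| ^ (r - 1))
  have hφz : φ z = M := by
    simp only [z, M, map_sum]
    refine Finset.sum_congr rfl fun i _ => ?_
    rw [lp_single_eq_smul_single_one, map_smul, smul_eq_mul, mul_right_comm, ← dualCoeff,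
      sign_mul_self, mul_comm, ← Real.rpow_add_one' (abs_nonneg _) (by simp [hpr.symm.ne_zero]),
      sub_add_cancel]
  have hz : ‖z‖ ^ p.toReal ≤ M := by
    rw [lp.norm_sum_single hpr.pos]
    refine Finset.sum_le_sum fun i _ => ?_
    have hsign : |(SignType.sign (y i) : ℝ)| ≤ 1 := by
      rcases SignType.sign (y i) with _ | _ | _ <;> simp
    calc ‖(SignType.sign (y i) : ℝ) * |y i| ^ (r - 1)‖ ^ p.toReal
        ≤ (|y i| ^ (r - 1)) ^ p.toReal := by
          rw [Real.norm_eq_abs, abs_mul, abs_of_nonneg (Real.rpow_nonneg (abs_nonneg (y i)) _)]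
          gcongr
          exact mul_le_of_le_one_left (by positivity) hsign
      _ = |y i| ^ r := by rw [← Real.rpow_mul (abs_nonneg _), hpr.symm.sub_one_mul_conj]
  have hMz : M ≤ ‖φ‖ * M ^ p.toReal⁻¹ := by
    calc M = φ z := hφz.symm
      _ ≤ ‖φ‖ * ‖z‖ := (le_abs_self _).trans (φ.le_opNorm z)
      _ ≤ ‖φ‖ * M ^ p.toReal⁻¹ := by
        gcongr
        exact (Real.le_rpow_inv_iff_of_pos (norm_nonneg _) hM hpr.pos).2 hz
  rcases hM.eq_or_lt with hM0 | hM0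
  · rw [← hM0]; positivity
  have hsplit : M ^ r⁻¹ * M ^ p.toReal⁻¹ = M := by
    rw [← Real.rpow_add hM0, add_comm, hpr.inv_add_inv_eq_one, Real.rpow_one]
  have hroot : M ^ r⁻¹ ≤ ‖φ‖ :=
    le_of_mul_le_mul_right (hsplit.trans_le hMz) (Real.rpow_pos_of_pos hM0 _)
  calc M = (M ^ r⁻¹) ^ r := (Real.rpow_inv_rpow hM hpr.symm.ne_zero).symm
    _ ≤ ‖φ‖ ^ r := by gcongr; exact hpr.symm.nonneg

end DualCoeff

theorem ENNReal.exists_holderConjugate_toReal {p : ℝ≥0∞} (hp : 1 < p) (hp' : p ≠ ∞) :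
    ∃ q : ℝ≥0∞, 1 ≤ q ∧ q ≠ ∞ ∧ p.toReal.HolderConjugate q.toReal := by
  have hpq := Real.HolderConjugate.conjExponent (p := p.toReal) (by
    simpa using (ENNReal.toReal_lt_toReal ENNReal.one_ne_top hp').2 hp)
  refine ⟨ENNReal.ofReal p.toReal.conjExponent, ?_, ENNReal.ofReal_ne_top, ?_⟩
  · simpa using ENNReal.ofReal_le_ofReal hpq.symm.lt.le
  · rwa [ENNReal.toReal_ofReal hpq.symm.nonneg]

section CoordinateTopology

variable {ι : Type*} {p : ℝ≥0∞} [Fact (1 ≤ p)]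

theorem abs_sub_sum_mul_dualCoeff_le [DecidableEq ι] (hp : p ≠ ∞) {q : ℝ≥0∞} [Fact (1 ≤ q)]
    (hpq : p.toReal.HolderConjugate q.toReal) (φ : StrongDual ℝ (lp (fun _ : ι => ℝ) p))
    (Y : lp (fun _ : ι => ℝ) q) (hY : ⇑Y = dualCoeff φ) (z : lp (fun _ : ι => ℝ) p)
    (s : Finset ι) :
    |φ z - ∑ i ∈ s, z i * Y i| ≤ ‖z‖ * ‖Y - ∑ i ∈ s, lp.single q i (Y i)‖ := by
  set T := Y - ∑ i ∈ s, lp.single q i (Y i)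
  have hT : ∀ i, T i = Y i - if i ∈ s then Y i else 0 := fun i => by
    simp only [T, lp.coeFn_sub, Pi.sub_apply, lp.coeFn_sum, Finset.sum_apply, lp.single_apply,
      Pi.single_apply, Finset.sum_ite_eq]
  have hfin : HasSum (fun i => z i * if i ∈ s then Y i else 0) (∑ i ∈ s, z i * Y i) := by
    have h : HasSum (fun i => z i * if i ∈ s then Y i else 0)
        (∑ i ∈ s, z i * if i ∈ s then Y i else 0) :=
      hasSum_sum_of_ne_finset_zero fun i hi => by simp [hi]
    rwa [Finset.sum_congr rfl fun i hi => by rw [if_pos hi]] at h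
  have hsum : HasSum (fun i => z i * T i) (φ z - ∑ i ∈ s, z i * Y i) := by
    refine ((hY ▸ hasSum_mul_dualCoeff hp φ z).sub hfin).congr_fun fun i => ?_
    rw [hT, mul_sub]
  calc |φ z - ∑ i ∈ s, z i * Y i| = ‖∑' i, z i * T i‖ := by
        rw [hsum.tsum_eq, Real.norm_eq_abs]
    _ ≤ ∑' i, ‖z i * T i‖ := norm_tsum_le_tsum_norm (by
        simpa only [norm_mul] using lp.summable_mul hpq z T)
    _ ≤ ‖z‖ * ‖T‖ := by simpa only [norm_mul] using lp.tsum_mul_le_mul_norm' hpq z T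

theorem continuous_toWeakSpace_lpCoordBallEquiv_symm (hp : 1 < p) (hp' : p ≠ ∞) :
    Continuous fun x : lpCoordBall ι p =>
      toWeakSpace ℝ _ (lpCoordBallEquiv.symm x).1 := by
  classical
  refine WeakBilin.continuous_of_continuous_eval _ fun φ => ?_
  show Continuous fun x => φ (lpCoordBallEquiv.symm x).1
  obtain ⟨q, hq, hq', hpq⟩ := ENNReal.exists_holderConjugate_toReal hp hp'
  have : Fact (1 ≤ q) := ⟨hq⟩
  have hY : Memℓp (dualCoeff φ) q := memℓp_gen' (C := ‖φ‖ ^ q.toReal) fun s => by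
    simpa only [Real.norm_eq_abs] using sum_abs_dualCoeff_rpow_le hpq φ s
  set Y : lp (fun _ : ι => ℝ) q := ⟨_, hY⟩
  have htail : Tendsto (fun s => ‖Y - ∑ i ∈ s, lp.single q i (Y i)‖) atTop (𝓝 0) :=
    (tendsto_iff_norm_sub_tendsto_zero.1 (lp.hasSum_single hq' Y)).congr fun s =>
      norm_sub_rev _ _
  have hcont (s : Finset ι) : Continuous fun x : lpCoordBall ι p => ∑ i ∈ s, (x : ι → ℝ) i * Y i :=
    continuous_finsetSum _ fun i _ =>
      ((continuous_apply i).comp continuous_subtype_val).mul continuous_const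
  refine TendstoUniformly.continuous (p := atTop) ?_ (Frequently.of_forall hcont)
  refine Metric.tendstoUniformly_iff.2 fun ε hε => ?_
  filter_upwards [htail.eventually (gt_mem_nhds hε)] with s hs x
  set z : lp (fun _ : ι => ℝ) p := (lpCoordBallEquiv.symm x).1
  rw [Real.dist_eq, ← coe_lpCoordBallEquiv_symm x]
  calc |φ z - ∑ i ∈ s, z i * Y i| ≤ ‖z‖ * ‖Y - ∑ i ∈ s, lp.single q i (Y i)‖ :=
        abs_sub_sum_mul_dualCoeff_le hp' hpq φ Y rfl z s
    _ ≤ ‖Y - ∑ i ∈ s, lp.single q i (Y i)‖ :=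
        mul_le_of_le_one_left (norm_nonneg _)
          (mem_closedBall_zero_iff.1 (lpCoordBallEquiv.symm x).2)
    _ < ε := hs

end CoordinateTopology

namespace PPV

theorem not_containsCopy_linf {Y : Type*} [NormedAddCommGroup Y] [NormedSpace ℝ Y]
    [SeparableSpace Y] : ¬ ContainsCopy Linf Y := by
  rintro ⟨T, c, hc, hT⟩
  have hanti : AntilipschitzWith (Real.toNNReal c⁻¹) T :=
    T.antilipschitz_of_bound fun x => by
      rw [Real.coe_toNNReal _ (inv_nonneg.2 hc.le), inv_mul_eq_div, le_div_iff₀ hc, mul_comm]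
      exact hT x
  have := UniformSpace.secondCountable_of_separable Y
  have := (hanti.isUniformEmbedding T.uniformContinuous).isEmbedding.secondCountableTopology
  exact not_separableSpace_lp_top (ι := ℕ) inferInstance

section WeakContinuity

variable {E F : Type*} [NormedAddCommGroup E] [NormedSpace ℝ E]
  [NormedAddCommGroup F] [NormedSpace ℝ F] {k : ℕ} {X : Type*} [TopologicalSpace X]

theorem continuous_comp_of_mem_polyWbSet {f : BoundedContinuousFunction (Ball E) F}
    (hf : f ∈ polyWbSet k E F) {g : X → Ball E}
    (hg : Continuous fun x => toWeakSpace ℝ E (g x)) : Continuous fun x => f (g x) := by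
  obtain ⟨A, ⟨-, hA⟩, hAw⟩ := hf
  simp only [hA]
  exact (hAw _ isBounded_closedBall).comp_continuous hg fun x => Set.mem_image_of_mem _ (g x).2

def polyWbToContinuousMap (e : X ≃ Ball E) (he : Continuous fun x => toWeakSpace ℝ E (e x)) :
    polyWbSet k E F → C(X, F) :=
  fun f => ⟨fun x => f.1 (e x), continuous_comp_of_mem_polyWbSet f.2 he⟩

theorem isometry_polyWbToContinuousMap [CompactSpace X] (e : X ≃ Ball E)
    (he : Continuous fun x => toWeakSpace ℝ E (e x)) :
    Isometry (polyWbToContinuousMap (k := k) (F := F) e he) := by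
  refine Isometry.of_dist_eq fun f g => le_antisymm ?_ ?_
  · exact (ContinuousMap.dist_le dist_nonneg).2 fun x =>
      BoundedContinuousFunction.dist_coe_le_dist (e x)
  · refine (BoundedContinuousFunction.dist_le dist_nonneg).2 fun y => ?_
    simpa [polyWbToContinuousMap] using
      ContinuousMap.dist_apply_le_dist (f := polyWbToContinuousMap e he f)
        (g := polyWbToContinuousMap e he g) (e.symm y)

end WeakContinuity

end PPV

namespace Stmts
open PPV Metric Filter Topology
open scoped ENNReal NNReal

theorem stmt19_general (p q : ℝ≥0∞) [Fact (1 ≤ p)] [Fact (1 ≤ q)]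
    (hp : 1 < p) (hp' : p ≠ ⊤) (hq' : q ≠ ⊤) (k : ℕ) :
    TopologicalSpace.SeparableSpace (polyWbSet k (Lp' p) (Lp' q)) ∧
      ¬ ContainsCopy Linf (polyWbSet k (Lp' p) (Lp' q)) := by
  have : SecondCountableTopology (Lp' q) := secondCountableTopology_lp hq'
  have : CompactSpace (lpCoordBall ℕ p) := isCompact_iff_compactSpace.1 isCompact_lpCoordBall
  have hθ := isometry_polyWbToContinuousMap (k := k) (E := Lp' p) (F := Lp' q)
    (X := lpCoordBall ℕ p) lpCoordBallEquiv.symm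
    (continuous_toWeakSpace_lpCoordBallEquiv_symm hp hp')
  have := hθ.isEmbedding.secondCountableTopology
  exact ⟨inferInstance, not_containsCopy_linf⟩

theorem stmt19 (p q : ℝ≥0∞) [Fact (1 ≤ p)] [Fact (1 ≤ q)]
    (hp : 1 < p) (hp' : p ≠ ⊤) (hq : 1 < q) (hq' : q ≠ ⊤) (k : ℕ) (hk : 1 ≤ k) :
    TopologicalSpace.SeparableSpace (polyWbSet k (Lp' p) (Lp' q)) ∧
      ¬ ContainsCopy Linf (polyWbSet k (Lp' p) (Lp' q)) :=
  stmt19_general p q hp hp' hq' k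

end Stmts
end
end
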